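/- arXiv:0808.1016 — 3 statements merged into one kernel-verified Lean document; each statement's English description precedes it below -/
import Mathlib

section
/- Suppose Med_c < 0 and O ≤ 2·F_c(0) - 1. Then the unique real β* with F_c(β*) = (1 + O)/2 satisfies β* ≤ 0, and β* is the unique median of the mixture CDF F. -/
open Filter Topology Function

/-- The mixture CDF `F(β) = π·1_{β ≥ 0} + (1-π)·F_c(β)`. -/
noncomputable def mixCDF (p : ℝ) (Fc : ℝ → ℝ) (β : ℝ) : ℝ :=
  (if 0 ≤ β then p else 0) + (1 - p) * Fc β

/-- `M` is a median of `F`: `F(M) ≥ 1/2` and the left limit `F(M⁻) ≤ 1/2`. -/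
def IsMedian (F : ℝ → ℝ) (M : ℝ) : Prop :=
  1 / 2 ≤ F M ∧ Function.leftLim F M ≤ 1 / 2

/-!
The atom of mass `π` at `0` only matters to the right of `0`, so up to `0` the mixture CDF is
`(1-π)·F_c`. The condition `O ≤ 2·F_c(0) - 1` says exactly that this continuous part reaches
`1/2` at some `β* ≤ 0`; there `F` crosses `1/2` continuously, strict monotonicity of `F_c`
rules out every other median, and the atom only pushes `F` further above `1/2`.
-/

section mixCDF

variable {p : ℝ} {Fc : ℝ → ℝ}

lemma mixCDF_of_neg {x : ℝ} (hx : x < 0) : mixCDF p Fc x = (1 - p) * Fc x := by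
  simp [mixCDF, not_le.2 hx]

lemma mul_le_mixCDF (hp : 0 ≤ p) (x : ℝ) : (1 - p) * Fc x ≤ mixCDF p Fc x := by
  unfold mixCDF
  split_ifs <;> linarith

lemma leftLim_mixCDF (hFc : Continuous Fc) (M : ℝ) :
    leftLim (mixCDF p Fc) M = (if 0 < M then p else 0) + (1 - p) * Fc M := by
  have hatom : ∀ᶠ x in 𝓝[<] M, (0 ≤ x ↔ 0 < M) := by
    rcases lt_or_ge 0 M with hM | hM
    · filter_upwards [Ioo_mem_nhdsLT hM] with x hx
      simp [hx.1.le, hM]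
    · filter_upwards [self_mem_nhdsWithin] with x (hx : x < M)
      simp [(hx.trans_le hM).not_ge, hM.not_gt]
  apply leftLim_eq_of_tendsto
  refine (((continuous_const.add (continuous_const.mul hFc)).tendsto M).mono_left
    nhdsWithin_le_nhds).congr' ?_
  filter_upwards [hatom] with x hx
  simp [mixCDF, hx]

lemma leftLim_mixCDF_of_nonpos (hFc : Continuous Fc) {M : ℝ} (hM : M ≤ 0) :
    leftLim (mixCDF p Fc) M = (1 - p) * Fc M := by
  simp [leftLim_mixCDF hFc, hM.not_gt]

lemma mul_le_leftLim_mixCDF (hp : 0 ≤ p) (hFc : Continuous Fc) (M : ℝ) :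
    (1 - p) * Fc M ≤ leftLim (mixCDF p Fc) M := by
  rw [leftLim_mixCDF hFc]
  split_ifs <;> linarith

theorem isMedian_mixCDF_iff (hp0 : 0 ≤ p) (hp1 : p < 1) (hFc : Continuous Fc)
    (hFc_mono : StrictMono Fc) {β : ℝ} (hβ0 : β ≤ 0) (hβ : (1 - p) * Fc β = 1 / 2)
    (M : ℝ) : IsMedian (mixCDF p Fc) M ↔ M = β := by
  have hcont_lt : ∀ {x y}, x < y → (1 - p) * Fc x < (1 - p) * Fc y := fun hxy =>
    mul_lt_mul_of_pos_left (hFc_mono hxy) (by linarith)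
  constructor
  · rintro ⟨hge, hleft⟩
    rcases lt_trichotomy M β with hlt | heq | hgt
    · have := hcont_lt hlt
      rw [← mixCDF_of_neg (hlt.trans_le hβ0)] at this
      linarith
    · exact heq
    · have := hcont_lt hgt
      have := mul_le_leftLim_mixCDF hp0 hFc M
      linarith
  · rintro rfl
    exact ⟨hβ ▸ mul_le_mixCDF hp0 M, (leftLim_mixCDF_of_nonpos hFc hβ0).trans_le hβ.le⟩

end mixCDF

theorem neg_case_small_odds_unique_median_general (p : ℝ) (hp0 : 0 ≤ p) (hp1 : p < 1)
    (Fc : ℝ → ℝ) (hFc_cont : Continuous Fc) (hFc_mono : StrictMono Fc)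
    (hO : p / (1 - p) ≤ 2 * Fc 0 - 1)
    (βs : ℝ) (hβs : Fc βs = (1 + p / (1 - p)) / 2) :
    βs ≤ 0 ∧ IsMedian (mixCDF p Fc) βs ∧
      ∀ M : ℝ, IsMedian (mixCDF p Fc) M → M = βs := by
  have hhalf : (1 - p) * Fc βs = 1 / 2 := by
    rw [hβs]
    field_simp [(sub_pos.2 hp1).ne']
    ring
  have hβs0 : βs ≤ 0 := hFc_mono.le_iff_le.1 (by rw [hβs]; linarith)
  have hmedian := isMedian_mixCDF_iff hp0 hp1 hFc_cont hFc_mono hβs0 hhalf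
  exact ⟨hβs0, (hmedian βs).2 rfl, fun M hM => (hmedian M).1 hM⟩

theorem neg_case_small_odds_unique_median (p : ℝ) (hp0 : 0 ≤ p) (hp1 : p < 1)
    (Fc : ℝ → ℝ) (hFc_cont : Continuous Fc) (hFc_mono : StrictMono Fc)
    (hFc_bot : Tendsto Fc atBot (𝓝 0)) (hFc_top : Tendsto Fc atTop (𝓝 1))
    (medc : ℝ) (hmedc : Fc medc = 1 / 2) (hmedc_neg : medc < 0)
    (hO : p / (1 - p) ≤ 2 * Fc 0 - 1)
    (βs : ℝ) (hβs : Fc βs = (1 + p / (1 - p)) / 2) :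
    βs ≤ 0 ∧ IsMedian (mixCDF p Fc) βs ∧
      ∀ M : ℝ, IsMedian (mixCDF p Fc) M → M = βs :=
  neg_case_small_odds_unique_median_general p hp0 hp1 Fc hFc_cont hFc_mono hO βs hβs
end

section
/- Suppose Med_c < 0 and O > 2·F_c(0) - 1. Then F(0⁻) < 1/2 and F(0) ≥ 1/2, so M = 0 is a median of the mixture CDF F. -/
open Filter Topology Function

/-!
At `0` the mixture CDF jumps from `F(0⁻) = (1-π)·F_c(0)` to `F(0) = π + (1-π)·F_c(0)`.
Since `Med_c < 0`, `F_c(0) > 1/2`, so `F(0)`, a convex combination of `1` and `F_c(0)`, is at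
least `1/2`; and the odds condition, after clearing the denominator `1-π`, says exactly
`(1-π)·F_c(0) < 1/2`.
-/

theorem mixCDF_zero (p : ℝ) (Fc : ℝ → ℝ) : mixCDF p Fc 0 = p + (1 - p) * Fc 0 := by
  simp [mixCDF]

theorem leftLim_mixCDF_zero (p : ℝ) {Fc : ℝ → ℝ} (hFc : ContinuousWithinAt Fc (Set.Iio 0) 0) :
    leftLim (mixCDF p Fc) 0 = (1 - p) * Fc 0 := by
  apply leftLim_eq_of_tendsto
  refine (hFc.tendsto.const_mul (1 - p)).congr' ?_
  filter_upwards [self_mem_nhdsWithin] with x (hx : x < 0)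
  simp [mixCDF, not_le.2 hx]

theorem mul_lt_half_iff_lt_odds {p : ℝ} (hp : p < 1) (x : ℝ) :
    (1 - p) * x < 1 / 2 ↔ 2 * x - 1 < p / (1 - p) := by
  rw [lt_div_iff₀ (sub_pos.2 hp)]
  constructor <;> intro h <;> linarith

theorem half_le_convex_comb {p x : ℝ} (hp0 : 0 ≤ p) (hp1 : p ≤ 1) (hx : 1 / 2 ≤ x) :
    1 / 2 ≤ p + (1 - p) * x := by
  nlinarith

theorem neg_case_large_odds_zero_is_median_general (p : ℝ) (hp0 : 0 ≤ p) (hp1 : p < 1)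
    (Fc : ℝ → ℝ) (hFc_cont : Continuous Fc) (hFc_mono : StrictMono Fc)
    (medc : ℝ) (hmedc : Fc medc = 1 / 2) (hmedc_neg : medc < 0)
    (hO : 2 * Fc 0 - 1 < p / (1 - p)) :
    Function.leftLim (mixCDF p Fc) 0 < 1 / 2 ∧ 1 / 2 ≤ mixCDF p Fc 0 ∧
      IsMedian (mixCDF p Fc) 0 := by
  have hleft : leftLim (mixCDF p Fc) 0 < 1 / 2 := by
    rw [leftLim_mixCDF_zero p hFc_cont.continuousWithinAt]
    exact (mul_lt_half_iff_lt_odds hp1 (Fc 0)).2 hO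
  have hFc_zero : 1 / 2 < Fc 0 := hmedc ▸ hFc_mono hmedc_neg
  have hat : 1 / 2 ≤ mixCDF p Fc 0 := by
    rw [mixCDF_zero]
    exact half_le_convex_comb hp0 hp1.le hFc_zero.le
  exact ⟨hleft, hat, hat, hleft.le⟩

theorem neg_case_large_odds_zero_is_median (p : ℝ) (hp0 : 0 ≤ p) (hp1 : p < 1)
    (Fc : ℝ → ℝ) (hFc_cont : Continuous Fc) (hFc_mono : StrictMono Fc)
    (hFc_bot : Tendsto Fc atBot (𝓝 0)) (hFc_top : Tendsto Fc atTop (𝓝 1))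
    (medc : ℝ) (hmedc : Fc medc = 1 / 2) (hmedc_neg : medc < 0)
    (hO : 2 * Fc 0 - 1 < p / (1 - p)) :
    Function.leftLim (mixCDF p Fc) 0 < 1 / 2 ∧ 1 / 2 ≤ mixCDF p Fc 0 ∧
      IsMedian (mixCDF p Fc) 0 :=
  neg_case_large_odds_zero_is_median_general p hp0 hp1 Fc hFc_cont hFc_mono medc hmedc hmedc_neg hO
end

section
/- (Location-scale form, equation (2.8), positive case) Suppose F_c(β) = G((β - m)/σ) where σ > 0, m > 0, and G : ℝ → ℝ is a continuous, strictly increasing CDF satisfying the symmetry G(-x) = 1 - G(x) for all x (so G(0) = 1/2 and Med_c = m). If O < |1 - 2·F_c(0)|, then the unique median of the mixture CDF F equals m - σ·G^{-1}((1 + O)/2), where G^{-1}((1+O)/2) is the unique x with G(x) = (1+O)/2. -/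
open Filter Topology Function

/-!
Since `m > 0`, the hypothesis `O < |1 - 2 F_c(0)|` says `(1 + O)/2 < G(m/σ)`, so the solution `x`
of `G x = (1 + O)/2` satisfies `M = m - σx > 0`. There the atom at `0` has already been
absorbed, and `F(M) = π + (1 - π)(1 - G x) = 1/2`. A strictly increasing `F` with `F(M) = 1/2`
has `M` as its only median.
-/

theorem StrictMono.isMedian_iff {F : ℝ → ℝ} (hF : StrictMono F) {M : ℝ} (hM : F M = 1 / 2)
    (M' : ℝ) : IsMedian F M' ↔ M' = M := by
  refine ⟨fun hM' => ?_, fun h => h ▸ ⟨hM.ge, (hF.monotone.leftLim_le le_rfl).trans hM.le⟩⟩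
  rcases lt_trichotomy M' M with hlt | heq | hgt
  · linarith [hF hlt, hM'.1]
  · exact heq
  · obtain ⟨c, hMc, hcM'⟩ := exists_between hgt
    linarith [hF hMc, hF.monotone.le_leftLim hcM', hM'.2]

section Mixture

variable {p : ℝ} {Fc : ℝ → ℝ}

theorem mixCDF_of_nonneg {β : ℝ} (hβ : 0 ≤ β) : mixCDF p Fc β = p + (1 - p) * Fc β := by
  rw [mixCDF, if_pos hβ]

theorem mixCDF_strictMono (hp0 : 0 ≤ p) (hp1 : p < 1) (hFc : StrictMono Fc) :
    StrictMono (mixCDF p Fc) := by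
  have hatom : Monotone fun β : ℝ => if 0 ≤ β then p else 0 := by
    intro u v huv
    dsimp only
    split_ifs with hu hv <;> first | exact le_rfl | exact hp0 | exact absurd (hu.trans huv) hv
  exact hatom.add_strictMono (hFc.const_mul (by linarith))

end Mixture

theorem half_of_forall_neg_eq_one_sub {G : ℝ → ℝ} (hG : ∀ x, G (-x) = 1 - G x) : G 0 = 1 / 2 := by
  linarith [neg_zero (G := ℝ) ▸ hG 0]

theorem location_scale_median_pos_case_general (p : ℝ) (hp0 : 0 ≤ p) (hp1 : p < 1)
    (Fc : ℝ → ℝ) (hFc_mono : StrictMono Fc)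
    (G : ℝ → ℝ) (hG_cont : Continuous G) (hG_mono : StrictMono G)
    (hG_bot : Tendsto G atBot (𝓝 0))
    (hG_sym : ∀ x : ℝ, G (-x) = 1 - G x)
    (m σ : ℝ) (hσ : 0 < σ)
    (hFc : ∀ β : ℝ, Fc β = G ((β - m) / σ)) (hm : 0 < m)
    (hO : p / (1 - p) < |1 - 2 * Fc 0|) :
    ∃ x : ℝ, G x = (1 + p / (1 - p)) / 2 ∧
      IsMedian (mixCDF p Fc) (m - σ * x) ∧
      ∀ M : ℝ, IsMedian (mixCDF p Fc) M → M = m - σ * x := by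
  have hp : 0 < 1 - p := by linarith
  have hO0 : 0 ≤ p / (1 - p) := div_nonneg hp0 hp.le
  have hG_half : 1 / 2 < G (m / σ) :=
    half_of_forall_neg_eq_one_sub hG_sym ▸ hG_mono (div_pos hm hσ)
  have hFc0 : 1 - 2 * Fc 0 = 2 * G (m / σ) - 1 := by
    rw [hFc, zero_sub, neg_div, hG_sym]; ring
  rw [hFc0, abs_of_pos (by linarith)] at hO
  have ht : (1 + p / (1 - p)) / 2 < G (m / σ) := by linarith
  obtain ⟨x, hx⟩ : (1 + p / (1 - p)) / 2 ∈ Set.range G :=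
    mem_range_of_exists_le_of_exists_ge hG_cont
      (hG_bot.eventually (eventually_le_nhds (by linarith))).exists ⟨m / σ, ht.le⟩
  have hM : 0 < m - σ * x := by
    have hx_lt := hG_mono.lt_iff_lt.1 (hx ▸ ht)
    rw [lt_div_iff₀ hσ] at hx_lt
    linarith
  have hFM : mixCDF p Fc (m - σ * x) = 1 / 2 := by
    rw [mixCDF_of_nonneg hM.le, hFc, show (m - σ * x - m) / σ = -x by field_simp; ring,
      hG_sym, hx]
    field_simp
    ring
  have hmedian := (mixCDF_strictMono hp0 hp1 hFc_mono).isMedian_iff hFM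
  exact ⟨x, hx, (hmedian _).2 rfl, fun M => (hmedian M).1⟩

theorem location_scale_median_pos_case (p : ℝ) (hp0 : 0 ≤ p) (hp1 : p < 1)
    (Fc : ℝ → ℝ) (hFc_cont : Continuous Fc) (hFc_mono : StrictMono Fc)
    (hFc_bot : Tendsto Fc atBot (𝓝 0)) (hFc_top : Tendsto Fc atTop (𝓝 1))
    (G : ℝ → ℝ) (hG_cont : Continuous G) (hG_mono : StrictMono G)
    (hG_bot : Tendsto G atBot (𝓝 0)) (hG_top : Tendsto G atTop (𝓝 1))
    (hG_sym : ∀ x : ℝ, G (-x) = 1 - G x)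
    (m σ : ℝ) (hσ : 0 < σ)
    (hFc : ∀ β : ℝ, Fc β = G ((β - m) / σ)) (hm : 0 < m)
    (hO : p / (1 - p) < |1 - 2 * Fc 0|) :
    ∃ x : ℝ, G x = (1 + p / (1 - p)) / 2 ∧
      IsMedian (mixCDF p Fc) (m - σ * x) ∧
      ∀ M : ℝ, IsMedian (mixCDF p Fc) M → M = m - σ * x :=
  location_scale_median_pos_case_general p hp0 hp1 Fc hFc_mono G hG_cont hG_mono hG_bot hG_sym m σ
    hσ hFc hm hO
end
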